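/- arXiv:2209.05657 — 2 statements merged into one kernel-verified Lean document; each statement's English description precedes it below -/
import Mathlib

section
/- Let f be a C^k function on an interval I ⊆ ℝ such that |f^(k)(x)| > η for all x ∈ I, where η > 0. Then for every σ ∈ (-1/k, 0) there exists a constant C(σ,k) > 0 depending only on σ and k such that ∫_I |f(x)|^σ dx < C(σ,k) · η^σ · |I|^(1+kσ), where |I| is the length of I. -/
open MeasureTheory Set

/-- If `g` has derivative `g' ≥ η` on an open interval, then `g` grows at rate `≥ η`. -/
lemma vdc_mvt_lower {a b η : ℝ} {g g' : ℝ → ℝ}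
    (hd : ∀ x ∈ Ioo a b, HasDerivAt g (g' x) x)
    (hη : ∀ x ∈ Ioo a b, η ≤ g' x) :
    ∀ x ∈ Ioo a b, ∀ y ∈ Ioo a b, x ≤ y → η * (y - x) ≤ g y - g x := by
  intro x hx y hy hxy
  rcases eq_or_lt_of_le hxy with rfl | hxy'
  · simp
  refine (convex_Ioo a b).mul_sub_le_image_sub_of_le_deriv
    (fun t ht => (hd t ht).continuousAt.continuousWithinAt)
    (fun t ht => by rw [interior_Ioo] at ht; exact (hd t ht).differentiableAt.differentiableWithinAt)
    (fun t ht => by rw [interior_Ioo] at ht; rw [(hd t ht).deriv]; exact hη t ht)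
    x hx y hy hxy

/-- A continuous function with `|g'| > η > 0` on an interval has constant sign. -/
lemma vdc_sign_const {a b η : ℝ} {g' : ℝ → ℝ} (hη0 : 0 < η)
    (hcont : ContinuousOn g' (Ioo a b))
    (hη : ∀ x ∈ Ioo a b, η < |g' x|) :
    (∀ x ∈ Ioo a b, η < g' x) ∨ (∀ x ∈ Ioo a b, η < -g' x) := by
  by_contra hcon
  push_neg at hcon
  obtain ⟨⟨x, hx, hx2⟩, ⟨y, hy, hy2⟩⟩ := hcon
  have hxneg : g' x < -η := by
    have := hη x hx
    rcases abs_cases (g' x) with ⟨h1, h2⟩ | ⟨h1, h2⟩ <;> linarith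
  have hypos : η < g' y := by
    have := hη y hy
    rcases abs_cases (g' y) with ⟨h1, h2⟩ | ⟨h1, h2⟩ <;> linarith
  have hsub : uIcc x y ⊆ Ioo a b := Set.ordConnected_Ioo.uIcc_subset hx hy
  have h0 : (0:ℝ) ∈ uIcc (g' x) (g' y) := by
    rw [mem_uIcc]
    left; constructor <;> linarith
  obtain ⟨z, hz, hz0⟩ := intermediate_value_uIcc (hcont.mono hsub) h0
  have := hη z (hsub hz)
  rw [hz0] at this
  simp at this
  linarith

lemma vdc_vol_base {a b η lam : ℝ} {g g' : ℝ → ℝ} (hη0 : 0 < η) (hlam : 0 ≤ lam)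
    (hd : ∀ x ∈ Ioo a b, HasDerivAt g (g' x) x)
    (hcont : ContinuousOn g' (Ioo a b))
    (hη : ∀ x ∈ Ioo a b, η < |g' x|) :
    volume {x ∈ Ioo a b | |g x| ≤ lam} ≤ ENNReal.ofReal (2 * lam / η) := by
  -- key growth estimate for ordered points in the sublevel set
  have key : ∀ x ∈ Ioo a b, ∀ y ∈ Ioo a b, x ≤ y → |g x| ≤ lam → |g y| ≤ lam →
      y - x ≤ 2 * lam / η := by
    intro x hx y hy hxy hgx hgy
    rcases vdc_sign_const hη0 hcont hη with hpos | hneg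
    · have := vdc_mvt_lower hd (fun t ht => le_of_lt (hpos t ht)) x hx y hy hxy
      have h1 := abs_le.mp hgx
      have h2 := abs_le.mp hgy
      rw [le_div_iff₀ hη0]
      nlinarith
    · have hd' : ∀ t ∈ Ioo a b, HasDerivAt (fun s => -g s) (-g' t) t :=
        fun t ht => (hd t ht).neg
      have := vdc_mvt_lower hd' (fun t ht => le_of_lt (hneg t ht)) x hx y hy hxy
      have h1 := abs_le.mp hgx
      have h2 := abs_le.mp hgy
      rw [le_div_iff₀ hη0]
      nlinarith
  refine le_trans (Real.volume_le_diam _) (EMetric.diam_le ?_)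
  rintro x ⟨hx, hgx⟩ y ⟨hy, hgy⟩
  rw [edist_dist, Real.dist_eq]
  apply ENNReal.ofReal_le_ofReal
  rcases le_total x y with h | h
  · rw [abs_of_nonpos (by linarith)]
    have := key x hx y hy h hgx hgy; linarith
  · rw [abs_of_nonneg (by linarith)]
    have := key y hy x hx h hgy hgx; linarith

set_option maxHeartbeats 1000000 in
lemma vdc_sublevel (k : ℕ) (hk : 0 < k) :
    ∀ (a b η lam : ℝ) (D : ℕ → ℝ → ℝ), 0 < η → 0 < lam →
    (∀ i < k, ∀ x ∈ Ioo a b, HasDerivAt (D i) (D (i+1) x) x) →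
    (∀ i ≤ k, ContinuousOn (D i) (Ioo a b)) →
    (∀ x ∈ Ioo a b, η < |D k x|) →
    volume {x ∈ Ioo a b | |D 0 x| ≤ lam} ≤
      ENNReal.ofReal ((17:ℝ)^k * (lam/η)^((k:ℝ)⁻¹)) := by
  induction k with
  | zero => omega
  | succ k ih =>
  rcases Nat.eq_zero_or_pos k with rfl | hk'
  · -- base case k+1 = 1
    intro a b η lam D hη0 hlam0 hd hcont hη
    refine le_trans (vdc_vol_base hη0 hlam0.le (hd 0 (by norm_num)) (hcont 1 le_rfl) hη) ?_
    apply ENNReal.ofReal_le_ofReal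
    have h1 : (lam/η) > 0 := div_pos hlam0 hη0
    norm_num
    rw [mul_div_assoc]
    nlinarith
  · -- inductive step, k ≥ 1
    intro a b η lam D hη0 hlam0 hd hcont hη
    have hkR : (0:ℝ) < (k:ℝ) := by exact_mod_cast hk'
    have hlamη : 0 < lam/η := div_pos hlam0 hη0
    obtain ⟨r, hr_def⟩ : ∃ r : ℝ, r = (lam/η) ^ (((k:ℝ)+1))⁻¹ := ⟨_, rfl⟩
    have hr0 : 0 < r := hr_def ▸ Real.rpow_pos_of_pos hlamη _
    obtain ⟨δ, hδ_def⟩ : ∃ d : ℝ, d = η * r := ⟨_, rfl⟩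
    have hδ0 : 0 < δ := hδ_def ▸ mul_pos hη0 hr0
    have hs0 : (0:ℝ) < (((k:ℝ)+1))⁻¹ := by positivity
    -- key exponent identity : (lam/δ)^(1/k) = r
    have hlamδ : (lam/δ) ^ ((k:ℝ)⁻¹) = r := by
      have h1 : lam/δ = r ^ (k:ℝ) := by
        rw [hδ_def, hr_def]
        have hX : (0:ℝ) < (lam/η) ^ (((k:ℝ)+1))⁻¹ := Real.rpow_pos_of_pos hlamη _
        rw [show lam / (η * (lam/η) ^ (((k:ℝ)+1))⁻¹) =
            (lam/η) / ((lam/η) ^ (((k:ℝ)+1))⁻¹) by field_simp]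
        rw [show (lam/η) / ((lam/η) ^ (((k:ℝ)+1))⁻¹) =
            (lam/η) ^ ((1:ℝ) - (((k:ℝ)+1))⁻¹) by
          rw [Real.rpow_sub hlamη, Real.rpow_one]]
        rw [← Real.rpow_mul hlamη.le]
        congr 1
        field_simp
        ring
      rw [h1, ← Real.rpow_mul hr0.le, mul_inv_cancel₀ (ne_of_gt hkR), Real.rpow_one]
    -- arithmetic bound needed at the end
    have h17 : (1:ℝ) ≤ 17^k := one_le_pow₀ (by norm_num)
    have hXbound : (lam/(δ/2)) ^ ((k:ℝ)⁻¹) ≤ 2 * r := by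
      have h2 : lam/(δ/2) = 2 * (lam/δ) := by field_simp
      rw [h2, Real.mul_rpow (by norm_num) (le_of_lt (div_pos hlam0 hδ0)), hlamδ]
      have : (2:ℝ) ^ ((k:ℝ)⁻¹) ≤ 2 := by
        nth_rewrite 2 [show (2:ℝ) = 2 ^ (1:ℝ) by rw [Real.rpow_one]]
        apply Real.rpow_le_rpow_of_exponent_le (by norm_num)
        rw [inv_le_one_iff₀]; right; exact_mod_cast hk'
      nlinarith
    have harith : 2 * δ / η + ((17:ℝ)^k * ((lam/(δ/2)) ^ ((k:ℝ)⁻¹))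
        + (17:ℝ)^k * ((lam/(δ/2)) ^ ((k:ℝ)⁻¹))) ≤ (17:ℝ)^(k+1) * r := by
      have h1 : 2 * δ / η = 2 * r := by rw [hδ_def]; field_simp
      have h2 : (17:ℝ)^(k+1) = 17 * 17^k := by ring
      nlinarith [hXbound, hr0.le]
    -- target rewriting
    have htarget : ENNReal.ofReal ((17:ℝ)^(k+1) * (lam/η)^(((k+1:ℕ):ℝ))⁻¹) =
        ENNReal.ofReal ((17:ℝ)^(k+1) * r) := by
      rw [hr_def]
      norm_num
    rw [show (((k:ℕ)+1:ℕ):ℝ) = ((k+1:ℕ):ℝ) by norm_cast, htarget]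
    -- the sublevel set of D k at level δ
    have hFsub : {x ∈ Ioo a b | |D k x| < δ} ⊆ Ioo a b := fun x hx => hx.1
    have volF : volume {x ∈ Ioo a b | |D k x| < δ} ≤ ENNReal.ofReal (2 * δ / η) := by
      refine le_trans (measure_mono ?_) (vdc_vol_base hη0 hδ0.le
        (hd k (by omega)) (hcont (k+1) le_rfl) hη)
      rintro x ⟨hx1, hx2⟩; exact ⟨hx1, hx2.le⟩
    -- convexity property of F
    have hconvF : ∀ x ∈ Ioo a b, ∀ z ∈ Ioo a b, ∀ y ∈ Ioo a b,
        x ≤ z → z ≤ y → |D k x| < δ → |D k y| < δ → |D k z| < δ := by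
      intro x hx z hz y hy hxz hzy hdx hdy
      rcases vdc_sign_const hη0 (hcont (k+1) le_rfl) hη with hpos | hneg
      · have m1 := vdc_mvt_lower (hd k (by omega)) (fun t ht => (hpos t ht).le) x hx z hz hxz
        have m2 := vdc_mvt_lower (hd k (by omega)) (fun t ht => (hpos t ht).le) z hz y hy hzy
        have h1 := abs_lt.mp hdx
        have h2 := abs_lt.mp hdy
        rw [abs_lt]
        constructor <;> nlinarith
      · have hd' : ∀ t ∈ Ioo a b, HasDerivAt (fun s => -(D k s)) (-(D (k+1) t)) t :=
          fun t ht => (hd k (by omega) t ht).neg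
        have m1 := vdc_mvt_lower hd' (fun t ht => (hneg t ht).le) x hx z hz hxz
        have m2 := vdc_mvt_lower hd' (fun t ht => (hneg t ht).le) z hz y hy hzy
        have h1 := abs_lt.mp hdx
        have h2 := abs_lt.mp hdy
        rw [abs_lt]
        constructor <;> nlinarith
    -- bound for sub-intervals where |D k| ≥ δ
    have subint : ∀ c e : ℝ, Ioo c e ⊆ Ioo a b → (∀ x ∈ Ioo c e, δ ≤ |D k x|) →
        volume {x ∈ Ioo c e | |D 0 x| ≤ lam} ≤
          ENNReal.ofReal ((17:ℝ)^k * ((lam/(δ/2)) ^ ((k:ℝ)⁻¹))) := by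
      intro c e hsub hge
      exact ih hk' c e (δ/2) lam D (by linarith) hlam0
        (fun i hi x hx => hd i (by omega) x (hsub hx))
        (fun i hi => (hcont i (by omega)).mono hsub)
        (fun x hx => lt_of_lt_of_le (by linarith) (hge x hx))
    have hnn1 : (0:ℝ) ≤ 2 * δ / η := div_nonneg (by linarith) hη0.le
    have hnn2 : (0:ℝ) ≤ (17:ℝ)^k * ((lam/(δ/2)) ^ ((k:ℝ)⁻¹)) := by
      apply mul_nonneg (by positivity)
      exact Real.rpow_nonneg (div_nonneg hlam0.le (by linarith)) _
    by_cases hFne : {x ∈ Ioo a b | |D k x| < δ}.Nonempty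
    · -- F nonempty: split into F and two side intervals
      have hFbdd_b : BddBelow {x ∈ Ioo a b | |D k x| < δ} := ⟨a, fun x hx => (hFsub hx).1.le⟩
      have hFbdd_a : BddAbove {x ∈ Ioo a b | |D k x| < δ} := ⟨b, fun x hx => (hFsub hx).2.le⟩
      obtain ⟨c, hc_def⟩ : ∃ c : ℝ, c = sInf {x ∈ Ioo a b | |D k x| < δ} := ⟨_, rfl⟩
      obtain ⟨d, hd_def⟩ : ∃ d : ℝ, d = sSup {x ∈ Ioo a b | |D k x| < δ} := ⟨_, rfl⟩
      have hcb : c ≤ b := by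
        obtain ⟨w, hw⟩ := hFne
        exact le_trans (hc_def ▸ csInf_le hFbdd_b hw) (hFsub hw).2.le
      have had : a ≤ d := by
        obtain ⟨w, hw⟩ := hFne
        exact le_trans (hFsub hw).1.le (hd_def ▸ le_csSup hFbdd_a hw)
      have hsplit : {x ∈ Ioo a b | |D 0 x| ≤ lam} ⊆
          ({x ∈ Ioo a b | |D k x| < δ} ∪ ({c} ∪ {x ∈ Ioo a c | |D 0 x| ≤ lam}))
          ∪ ({d} ∪ {x ∈ Ioo d b | |D 0 x| ≤ lam}) := by
        rintro x ⟨hx, hgx⟩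
        by_cases hxF : x ∈ {x ∈ Ioo a b | |D k x| < δ}
        · exact Or.inl (Or.inl hxF)
        have hxk : δ ≤ |D k x| := by
          by_contra hcon
          exact hxF ⟨hx, lt_of_not_ge hcon⟩
        have hside : x ≤ c ∨ d ≤ x := by
          by_contra hcon
          push_neg at hcon
          obtain ⟨p, hp, hpx⟩ := exists_lt_of_csInf_lt hFne (hc_def ▸ hcon.1)
          obtain ⟨q, hq, hxq⟩ := exists_lt_of_lt_csSup hFne (hd_def ▸ hcon.2)
          have := hconvF p (hFsub hp) x hx q (hFsub hq) hpx.le hxq.le hp.2 hq.2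
          linarith
        rcases hside with h | h
        · rcases eq_or_lt_of_le h with rfl | hlt
          · exact Or.inl (Or.inr (Or.inl rfl))
          · exact Or.inl (Or.inr (Or.inr ⟨⟨hx.1, hlt⟩, hgx⟩))
        · rcases eq_or_lt_of_le h with rfl | hlt
          · exact Or.inr (Or.inl rfl)
          · exact Or.inr (Or.inr ⟨⟨hlt, hx.2⟩, hgx⟩)
      have vol1 : volume {x ∈ Ioo a c | |D 0 x| ≤ lam} ≤
          ENNReal.ofReal ((17:ℝ)^k * ((lam/(δ/2)) ^ ((k:ℝ)⁻¹))) := by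
        apply subint
        · intro x hx; exact ⟨hx.1, lt_of_lt_of_le hx.2 hcb⟩
        · intro x hx
          by_contra hcon
          have hxF : x ∈ {x ∈ Ioo a b | |D k x| < δ} :=
            ⟨⟨hx.1, lt_of_lt_of_le hx.2 hcb⟩, lt_of_not_ge hcon⟩
          exact absurd (hc_def ▸ csInf_le hFbdd_b hxF) (not_le.mpr hx.2)
      have vol2 : volume {x ∈ Ioo d b | |D 0 x| ≤ lam} ≤
          ENNReal.ofReal ((17:ℝ)^k * ((lam/(δ/2)) ^ ((k:ℝ)⁻¹))) := by
        apply subint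
        · intro x hx; exact ⟨lt_of_le_of_lt had hx.1, hx.2⟩
        · intro x hx
          by_contra hcon
          have hxF : x ∈ {x ∈ Ioo a b | |D k x| < δ} :=
            ⟨⟨lt_of_le_of_lt had hx.1, hx.2⟩, lt_of_not_ge hcon⟩
          exact absurd (hd_def ▸ le_csSup hFbdd_a hxF) (not_le.mpr hx.1)
      have hBc : volume ({c} ∪ {x ∈ Ioo a c | |D 0 x| ≤ lam}) ≤
          volume {x ∈ Ioo a c | |D 0 x| ≤ lam} := by
        refine le_trans (measure_union_le _ _) ?_
        rw [measure_singleton, zero_add]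
      have hBd : volume ({d} ∪ {x ∈ Ioo d b | |D 0 x| ≤ lam}) ≤
          volume {x ∈ Ioo d b | |D 0 x| ≤ lam} := by
        refine le_trans (measure_union_le _ _) ?_
        rw [measure_singleton, zero_add]
      refine le_trans (measure_mono hsplit) (le_trans (measure_union_le _ _) ?_)
      refine le_trans (add_le_add (le_trans (measure_union_le _ _)
        (add_le_add volF hBc)) hBd) ?_
      refine le_trans (add_le_add (add_le_add le_rfl vol1) vol2) ?_
      rw [← ENNReal.ofReal_add hnn1 hnn2, ← ENNReal.ofReal_add (add_nonneg hnn1 hnn2) hnn2]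
      exact ENNReal.ofReal_le_ofReal (by linarith [harith])
    · -- F empty : |D k| ≥ δ everywhere
      rw [not_nonempty_iff_eq_empty] at hFne
      have hge : ∀ x ∈ Ioo a b, δ ≤ |D k x| := by
        intro x hx
        by_contra hcon
        have : x ∈ {x ∈ Ioo a b | |D k x| < δ} := ⟨hx, lt_of_not_ge hcon⟩
        rw [hFne] at this
        exact this
      refine le_trans (subint a b (fun x hx => hx) hge) (ENNReal.ofReal_le_ofReal ?_)
      linarith [harith, hnn1, hnn2]

lemma vdc_vol_Icc (k : ℕ) (hk : 0 < k) {a b η lam : ℝ} {f : ℝ → ℝ}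
    (hη0 : 0 < η) (hlam0 : 0 < lam)
    (hf : ContDiffOn ℝ k f (Icc a b))
    (hder : ∀ x ∈ Icc a b, η < |iteratedDerivWithin k f (Icc a b) x|) :
    volume {x ∈ Icc a b | |f x| ≤ lam} ≤
      ENNReal.ofReal ((17:ℝ)^k * (lam/η)^((k:ℝ)⁻¹)) := by
  set D : ℕ → ℝ → ℝ := fun i => iteratedDerivWithin i f (Icc a b) with hD_def
  have hIoo : volume {x ∈ Ioo a b | |D 0 x| ≤ lam} ≤
      ENNReal.ofReal ((17:ℝ)^k * (lam/η)^((k:ℝ)⁻¹)) := by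
    apply vdc_sublevel k hk a b η lam D hη0 hlam0
    · intro i hi x hx
      have hab : a < b := lt_trans hx.1 hx.2
      have hu : UniqueDiffOn ℝ (Icc a b) := uniqueDiffOn_Icc hab
      have hdiff : DifferentiableWithinAt ℝ (D i) (Icc a b) x :=
        (hf.differentiableOn_iteratedDerivWithin (by exact_mod_cast hi) hu) x
          (Ioo_subset_Icc_self hx)
      have h1 : HasDerivWithinAt (D i) (derivWithin (D i) (Icc a b) x) (Icc a b) x :=
        hdiff.hasDerivWithinAt
      have h2 : D (i+1) x = derivWithin (D i) (Icc a b) x :=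
        congrFun iteratedDerivWithin_succ x
      rw [h2]
      exact h1.hasDerivAt (Icc_mem_nhds hx.1 hx.2)
    · intro i hi x hx
      have hab : a < b := lt_trans hx.1 hx.2
      have hu : UniqueDiffOn ℝ (Icc a b) := uniqueDiffOn_Icc hab
      exact ((hf.continuousOn_iteratedDerivWithin (by exact_mod_cast hi) hu).mono
        Ioo_subset_Icc_self) x hx
    · exact fun x hx => hder x (Ioo_subset_Icc_self hx)
  calc volume {x ∈ Icc a b | |f x| ≤ lam}
      ≤ volume ({x ∈ Ioo a b | |D 0 x| ≤ lam} ∪ ({a} ∪ {b})) := by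
        apply measure_mono
        rintro x ⟨hx, hfx⟩
        rcases eq_or_lt_of_le hx.1 with rfl | h1
        · exact Or.inr (Or.inl rfl)
        rcases eq_or_lt_of_le hx.2 with rfl | h2
        · exact Or.inr (Or.inr rfl)
        exact Or.inl ⟨⟨h1, h2⟩, by simpa [hD_def] using hfx⟩
    _ ≤ volume {x ∈ Ioo a b | |D 0 x| ≤ lam} + (volume ({a}:Set ℝ) + volume ({b}:Set ℝ)) :=
        le_trans (measure_union_le _ _) (by gcongr; exact measure_union_le _ _)
    _ ≤ ENNReal.ofReal ((17:ℝ)^k * (lam/η)^((k:ℝ)⁻¹)) := by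
        rw [measure_singleton, measure_singleton, add_zero, add_zero]
        exact hIoo

set_option maxHeartbeats 1000000 in
/-- Van der Corput-type lemma: if `f` is `C^k` on `[a,b]` with `|f^(k)| > η`
there, then for `σ ∈ (-1/k, 0)` one has
`∫_I |f|^σ < C(σ,k) η^σ |I|^(1+kσ)` with `C(σ,k)` depending only on `σ, k`. -/
theorem stmt0 (k : ℕ) (hk : 0 < k) (σ : ℝ) (hσ₁ : -(1 / (k : ℝ)) < σ) (hσ₂ : σ < 0) :
    ∃ C : ℝ, 0 < C ∧
      ∀ (a b η : ℝ) (f : ℝ → ℝ), a < b → 0 < η →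
        ContDiffOn ℝ k f (Set.Icc a b) →
        (∀ x ∈ Set.Icc a b, η < |iteratedDerivWithin k f (Set.Icc a b) x|) →
        IntegrableOn (fun x => |f x| ^ σ) (Set.Icc a b) ∧
          ∫ x in Set.Icc a b, |f x| ^ σ < C * η ^ σ * (b - a) ^ (1 + (k : ℝ) * σ) := by
  have hkR : (0:ℝ) < (k:ℝ) := by exact_mod_cast hk
  obtain ⟨u, hu_def⟩ : ∃ u : ℝ, u = (k:ℝ) * σ := ⟨_, rfl⟩
  have hu0 : u < 0 := hu_def ▸ mul_neg_of_pos_of_neg hkR hσ₂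
  have hu1 : (-1:ℝ) < u := by
    have h := (mul_lt_mul_iff_right₀ hkR).mpr hσ₁
    rw [mul_neg, mul_one_div, div_self (ne_of_gt hkR)] at h
    rw [hu_def]; linarith
  obtain ⟨p, hp_def⟩ : ∃ p : ℝ, p = u⁻¹ := ⟨_, rfl⟩
  have hpu : p * u = 1 := hp_def ▸ inv_mul_cancel₀ (ne_of_lt hu0)
  have hpneg : p < 0 := hp_def ▸ inv_lt_zero.mpr hu0
  have hp : p < -1 := by nlinarith
  obtain ⟨A, hA_def⟩ : ∃ A : ℝ, A = (17:ℝ)^k := ⟨_, rfl⟩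
  have hA : 0 < A := by rw [hA_def]; positivity
  obtain ⟨c₂, hc₂_def⟩ : ∃ c : ℝ, c = (-(p+1))⁻¹ := ⟨_, rfl⟩
  have hc₂ : 0 < c₂ := by rw [hc₂_def]; rw [inv_pos]; linarith
  have hp1ne : p + 1 ≠ 0 := by linarith
  obtain ⟨C₀, hC₀_def⟩ : ∃ c : ℝ, c = (1 + c₂) * A ^ (-u) := ⟨_, rfl⟩
  have hC₀ : 0 < C₀ := by
    rw [hC₀_def]
    exact mul_pos (by linarith) (Real.rpow_pos_of_pos hA _)
  refine ⟨C₀ + 1, by linarith, ?_⟩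
  intro a b η f hab hη0 hf hder
  have hba : 0 < b - a := by linarith
  have hX : 0 < η ^ σ * (b - a) ^ (1 + (k:ℝ)*σ) :=
    mul_pos (Real.rpow_pos_of_pos hη0 _) (Real.rpow_pos_of_pos hba _)
  have hGnn : ∀ x : ℝ, 0 ≤ |f x| ^ σ := fun x => Real.rpow_nonneg (abs_nonneg _) _
  have hGm : AEMeasurable (fun x => |f x| ^ σ) (volume.restrict (Icc a b)) := by
    have h1 : AEMeasurable f (volume.restrict (Icc a b)) :=
      hf.continuousOn.aemeasurable measurableSet_Icc
    exact ((measurable_id.pow_const σ).comp measurable_abs).comp_aemeasurable h1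
  have hηk : (0:ℝ) < η ^ ((k:ℝ)⁻¹) := Real.rpow_pos_of_pos hη0 _
  obtain ⟨B, hB_def⟩ : ∃ B : ℝ, B = η ^ ((k:ℝ)⁻¹) * (b - a) / A := ⟨_, rfl⟩
  have hB : 0 < B := by rw [hB_def]; positivity
  obtain ⟨t₀, ht₀_def⟩ : ∃ t : ℝ, t = B ^ u := ⟨_, rfl⟩
  have ht₀ : 0 < t₀ := ht₀_def ▸ Real.rpow_pos_of_pos hB _
  obtain ⟨c₁, hc₁_def⟩ : ∃ c : ℝ, c = A / η ^ ((k:ℝ)⁻¹) := ⟨_, rfl⟩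
  have hc₁ : 0 < c₁ := by rw [hc₁_def]; positivity
  -- pointwise measure bounds
  have bound1 : ∀ t : ℝ, volume.restrict (Icc a b) {x | t < |f x| ^ σ} ≤
      ENNReal.ofReal (b - a) := by
    intro t
    rw [Measure.restrict_apply' measurableSet_Icc]
    refine le_trans (measure_mono inter_subset_right) ?_
    rw [Real.volume_Icc]
  have bound2 : ∀ t : ℝ, 0 < t → volume.restrict (Icc a b) {x | t < |f x| ^ σ} ≤
      ENNReal.ofReal (c₁ * t ^ p) := by
    intro t ht
    have hlam : 0 < t ^ σ⁻¹ := Real.rpow_pos_of_pos ht _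
    have hsub : {x | t < |f x| ^ σ} ∩ Icc a b ⊆ {x ∈ Icc a b | |f x| ≤ t ^ σ⁻¹} := by
      rintro x ⟨hx1, hx2⟩
      rw [mem_setOf_eq] at hx1
      refine ⟨hx2, ?_⟩
      have hfx : f x ≠ 0 := by
        intro h0
        rw [h0, abs_zero, Real.zero_rpow (ne_of_lt hσ₂)] at hx1
        linarith
      have hfx0 : 0 < |f x| := abs_pos.mpr hfx
      have h1 : (|f x| ^ σ) ^ σ⁻¹ ≤ t ^ σ⁻¹ :=
        Real.rpow_le_rpow_of_nonpos ht (le_of_lt hx1) (by linarith [inv_lt_zero.mpr hσ₂])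
      rwa [← Real.rpow_mul (abs_nonneg _), mul_inv_cancel₀ (ne_of_lt hσ₂),
        Real.rpow_one] at h1
    rw [Measure.restrict_apply' measurableSet_Icc]
    refine le_trans (measure_mono hsub) (le_trans (vdc_vol_Icc k hk hη0 hlam hf hder) ?_)
    apply le_of_eq
    congr 1
    rw [← hA_def, Real.div_rpow (Real.rpow_nonneg ht.le _) hη0.le,
      ← Real.rpow_mul ht.le]
    rw [show σ⁻¹ * (k:ℝ)⁻¹ = p by rw [hp_def, hu_def, mul_inv]; ring]
    rw [hc₁_def]; ring
  -- algebraic identities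
  have e1 : t₀ ^ (p+1) = B ^ (1 + u) := by
    rw [ht₀_def, ← Real.rpow_mul hB.le]
    congr 1
    rw [mul_add, mul_one, mul_comm u p, hpu]
  have e3 : c₁ * B = b - a := by
    rw [hc₁_def, hB_def]; field_simp
  have e4 : -(t₀ ^ (p+1)) / (p+1) = t₀ ^ (p+1) * c₂ := by
    rw [hc₂_def, inv_neg, mul_neg, ← div_eq_mul_inv, neg_div]
  have e5 : B ^ u = A ^ (-u) * (η ^ σ * (b-a) ^ u) := by
    rw [hB_def, Real.div_rpow (by positivity) hA.le,
      Real.mul_rpow hηk.le hba.le, ← Real.rpow_mul hη0.le,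
      show (k:ℝ)⁻¹ * u = σ by rw [hu_def]; field_simp,
      Real.rpow_neg hA.le, div_eq_mul_inv]
    ring
  have nn1 : (0:ℝ) ≤ (b-a) * t₀ := mul_nonneg hba.le ht₀.le
  have nn2 : (0:ℝ) ≤ c₁ * (-(t₀ ^ (p+1)) / (p+1)) := by
    rw [e4]
    exact mul_nonneg hc₁.le (mul_nonneg (Real.rpow_nonneg ht₀.le _) hc₂.le)
  have algebra : (b-a) * t₀ + c₁ * (-(t₀ ^ (p+1)) / (p+1)) =
      C₀ * (η ^ σ * (b - a) ^ (1 + (k:ℝ)*σ)) := by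
    rw [e4, e1, Real.rpow_add hB, Real.rpow_one]
    have step : (b-a) * t₀ + c₁ * (B * B ^ u * c₂) = (1 + c₂) * ((b-a) * B ^ u) := by
      rw [ht₀_def]
      linear_combination (B ^ u * c₂) * e3
    rw [step, e5, hC₀_def, ← hu_def, Real.rpow_add hba, Real.rpow_one]
    ring
  -- the main lintegral bound
  have total : ∫⁻ x, ENNReal.ofReal (|f x| ^ σ) ∂(volume.restrict (Icc a b)) ≤
      ENNReal.ofReal (C₀ * (η ^ σ * (b - a) ^ (1 + (k:ℝ)*σ))) := by
    rw [lintegral_eq_lintegral_meas_lt _ (Filter.Eventually.of_forall hGnn) hGm]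
    rw [← Ioc_union_Ioi_eq_Ioi ht₀.le]
    refine le_trans (lintegral_union_le _ _ _) ?_
    have piece1 : ∫⁻ t in Ioc 0 t₀, volume.restrict (Icc a b) {x | t < |f x| ^ σ} ≤
        ENNReal.ofReal ((b-a) * t₀) := by
      refine le_trans (setLIntegral_mono' measurableSet_Ioc (fun t _ => bound1 t)) ?_
      rw [setLIntegral_const, Real.volume_Ioc, ← ENNReal.ofReal_mul (by linarith), sub_zero]
    have intg : IntegrableOn (fun t : ℝ => c₁ * t ^ p) (Ioi t₀) :=
      (integrableOn_Ioi_rpow_of_lt hp ht₀).const_mul c₁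
    have piece2 : ∫⁻ t in Ioi t₀, volume.restrict (Icc a b) {x | t < |f x| ^ σ} ≤
        ENNReal.ofReal (c₁ * (-(t₀ ^ (p+1)) / (p+1))) := by
      refine le_trans (setLIntegral_mono' measurableSet_Ioi
        (fun t ht => bound2 t (lt_trans ht₀ (mem_Ioi.mp ht)))) ?_
      rw [← ofReal_integral_eq_lintegral_ofReal intg ?nng]
      case nng =>
        filter_upwards [ae_restrict_mem measurableSet_Ioi] with t ht
        exact mul_nonneg hc₁.le (Real.rpow_nonneg (le_of_lt (lt_trans ht₀ ht)) _)
      apply ENNReal.ofReal_le_ofReal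
      rw [MeasureTheory.integral_const_mul, integral_Ioi_rpow_of_lt hp ht₀]
    refine le_trans (add_le_add piece1 piece2) ?_
    rw [← ENNReal.ofReal_add nn1 nn2]
    exact ENNReal.ofReal_le_ofReal (le_of_eq algebra)
  -- conclude
  have hfin : HasFiniteIntegral (fun x => |f x| ^ σ) (volume.restrict (Icc a b)) := by
    rw [hasFiniteIntegral_iff_ofReal (Filter.Eventually.of_forall hGnn)]
    exact lt_of_le_of_lt total ENNReal.ofReal_lt_top
  have hint : IntegrableOn (fun x => |f x| ^ σ) (Icc a b) :=
    ⟨hGm.aestronglyMeasurable, hfin⟩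
  refine ⟨hint, ?_⟩
  rw [integral_eq_lintegral_of_nonneg_ae (Filter.Eventually.of_forall hGnn)
    hGm.aestronglyMeasurable]
  have h1 : (∫⁻ x, ENNReal.ofReal (|f x| ^ σ) ∂(volume.restrict (Icc a b))).toReal ≤
      C₀ * (η ^ σ * (b - a) ^ (1 + (k:ℝ)*σ)) := by
    refine le_trans (ENNReal.toReal_mono ENNReal.ofReal_ne_top total) ?_
    rw [ENNReal.toReal_ofReal (le_of_lt (mul_pos hC₀ hX))]
  calc (∫⁻ x, ENNReal.ofReal (|f x| ^ σ) ∂(volume.restrict (Icc a b))).toReal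
      ≤ C₀ * (η ^ σ * (b - a) ^ (1 + (k:ℝ)*σ)) := h1
    _ < (C₀ + 1) * η ^ σ * (b - a) ^ (1 + (k:ℝ)*σ) := by nlinarith
end

section
/- Let ε : (−δ,δ) → ℝ be a C^∞ function flat at 0, let j ≥ 1 and define ψ(x,y) = ε(x)/y^j on the region U₁^(p) = { (x,y) : |x| ≤ r, y > x^p } for an even integer p ≥ 1. Then for every (α,β) ∈ ℤ≥0², the partial derivative ∂^{α+β}ψ/∂x^β∂y^α tends to 0 as (x,y) → (0,0) within U₁^(p); in particular every partial derivative of ψ extends continuously to the closure of U₁^(p). -/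
open Filter Set
open scoped ContDiff Topology

private lemma iterDerivCMul (c : ℝ) (f : ℝ → ℝ) (n : ℕ) :
    deriv^[n] (fun x => c * f x) = fun x => c * deriv^[n] f x := by
  induction n generalizing f with
  | zero => simp
  | succ n ih =>
    rw [Function.iterate_succ_apply, deriv_const_mul_field', ih]
    funext x
    rw [Function.iterate_succ_apply]

private lemma flatBound : ∀ (l : ℕ) (f : ℝ → ℝ), ContDiff ℝ ∞ f →
    (∀ n, iteratedDeriv n f 0 = 0) →
    ∃ C, 0 < C ∧ ∀ x : ℝ, |x| ≤ 1 → |f x| ≤ C * |x| ^ l := by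
  intro l
  induction l with
  | zero =>
    intro f hf _
    obtain ⟨C, hC⟩ := (isCompact_Icc (a := (-1:ℝ)) (b := 1)).exists_bound_of_continuousOn
      hf.continuous.continuousOn
    have hC0 : 0 ≤ C := le_trans (norm_nonneg _) (hC 0 (by norm_num))
    refine ⟨C + 1, by linarith, fun x hx => ?_⟩
    have hmem : x ∈ Icc (-1:ℝ) 1 := by
      rcases abs_le.mp hx with ⟨h1, h2⟩; exact ⟨h1, h2⟩
    have := hC x hmem
    rw [Real.norm_eq_abs] at this
    simpa using this.trans (by linarith)
  | succ l ih =>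
    intro f hf hflat
    obtain ⟨C, hC, hB⟩ := ih (deriv f) (contDiff_infty_iff_deriv.mp hf).2
      (fun n => by rw [← iteratedDeriv_succ']; exact hflat (n+1))
    refine ⟨C, hC, fun x hx => ?_⟩
    have h0 : f 0 = 0 := by simpa using hflat 0
    have key : ‖f x - f 0‖ ≤ (C * |x| ^ l) * ‖x - 0‖ := by
      apply Convex.norm_image_sub_le_of_norm_deriv_le (s := Set.uIcc 0 x)
      · intro t _
        exact (hf.differentiable (by simp)).differentiableAt
      · intro t ht
        have ht' : |t| ≤ |x| := by
          rcases Set.mem_uIcc.mp ht with ⟨h1, h2⟩ | ⟨h1, h2⟩ <;>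
            exact abs_le.mpr ⟨by linarith [neg_abs_le x, abs_nonneg x, le_abs_self x],
              by linarith [neg_abs_le x, abs_nonneg x, le_abs_self x]⟩
        rw [Real.norm_eq_abs]
        calc |deriv f t| ≤ C * |t| ^ l := hB t (ht'.trans hx)
          _ ≤ C * |x| ^ l := by gcongr
      · exact convex_uIcc 0 x
      · exact Set.left_mem_uIcc
      · exact Set.right_mem_uIcc
    rw [h0, sub_zero, sub_zero, Real.norm_eq_abs, Real.norm_eq_abs] at key
    calc |f x| ≤ C * |x| ^ l * |x| := key
      _ = C * |x| ^ (l + 1) := by ring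

/-- For `ε` smooth and flat at `0`, `j ≥ 1` and `ψ(x,y) = ε(x)/y^j`, every mixed
partial derivative `∂^{α+β}ψ/∂y^α∂x^β` tends to `0` as `(x,y) → (0,0)` within
`U₁⁽ᵖ⁾ = {|x| ≤ r, y > x^p}`; in particular every partial derivative of `ψ`
extends continuously to the closure of `U₁⁽ᵖ⁾`. -/
theorem stmt17 (ε : ℝ → ℝ) (hsm : ContDiff ℝ (⊤ : ℕ∞) ε)
    (hflat : ∀ n : ℕ, iteratedDeriv n ε 0 = 0)
    (j : ℕ) (hj : 1 ≤ j) (p : ℕ) (hpe : Even p) (hp : 1 ≤ p)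
    (r : ℝ) (hr : 0 < r) :
    ∀ α β : ℕ,
      Tendsto
        (fun q : ℝ × ℝ =>
          iteratedDeriv α (fun y => iteratedDeriv β (fun x => ε x / y ^ j) q.1) q.2)
        (nhdsWithin (0, 0) {q : ℝ × ℝ | |q.1| ≤ r ∧ q.1 ^ p < q.2}) (nhds 0) ∧
      ∃ g : ℝ × ℝ → ℝ,
        ContinuousOn g (closure {q : ℝ × ℝ | |q.1| ≤ r ∧ q.1 ^ p < q.2}) ∧
        ∀ q ∈ {q : ℝ × ℝ | |q.1| ≤ r ∧ q.1 ^ p < q.2},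
          g q = iteratedDeriv α (fun y => iteratedDeriv β (fun x => ε x / y ^ j) q.1) q.2 := by
  intro α β
  set U : Set (ℝ × ℝ) := {q : ℝ × ℝ | |q.1| ≤ r ∧ q.1 ^ p < q.2} with hU
  set Cl : Set (ℝ × ℝ) := {q : ℝ × ℝ | |q.1| ≤ r ∧ q.1 ^ p ≤ q.2} with hCl
  set m : ℤ := -(j:ℤ) with hm
  set P : ℝ := ∏ i ∈ Finset.range α, ((m:ℝ) - (i:ℝ)) with hP
  set g : ℝ × ℝ → ℝ :=
    fun q => if 0 < q.2 then deriv^[β] ε q.1 * (P * q.2 ^ (m - (α:ℤ))) else 0 with hg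
  -- the explicit formula for the mixed derivative
  have hformula : ∀ q : ℝ × ℝ,
      iteratedDeriv α (fun y => iteratedDeriv β (fun x => ε x / y ^ j) q.1) q.2
        = deriv^[β] ε q.1 * (P * q.2 ^ (m - (α:ℤ))) := by
    intro q
    have h1 : ∀ y : ℝ, iteratedDeriv β (fun x => ε x / y ^ j) q.1
        = (y ^ j)⁻¹ * deriv^[β] ε q.1 := by
      intro y
      have hfun : (fun x => ε x / y ^ j) = fun x => (y ^ j)⁻¹ * ε x := by
        funext x; rw [div_eq_inv_mul]
      rw [hfun, iteratedDeriv_eq_iterate, iterDerivCMul]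
    have h2 : (fun y : ℝ => iteratedDeriv β (fun x => ε x / y ^ j) q.1)
        = fun y : ℝ => deriv^[β] ε q.1 * y ^ m := by
      funext y
      rw [h1, mul_comm, hm, zpow_neg, zpow_natCast]
    rw [h2, iteratedDeriv_eq_iterate, iterDerivCMul]
    simp only [iter_deriv_zpow, hP]
  -- flat bound for deriv^[β] ε
  have hE : ContDiff ℝ ∞ (deriv^[β] ε) := ContDiff.iterate_deriv β (hsm.of_le (by simp))
  have hEflat : ∀ n, iteratedDeriv n (deriv^[β] ε) 0 = 0 := by
    intro n
    rw [iteratedDeriv_eq_iterate, ← Function.iterate_add_apply]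
    rw [← iteratedDeriv_eq_iterate]
    exact hflat (n + β)
  obtain ⟨C, hC, hB⟩ := flatBound (p * (j + α + 1)) _ hE hEflat
  set K : ℝ := C * |P| + 1 with hK
  have hK0 : 0 < K := by positivity
  -- key pointwise estimate
  have hest : ∀ q : ℝ × ℝ, |q.1| ≤ 1 → q ∈ Cl → |g q| ≤ K * q.2 := by
    intro q h1 hq
    have hx0 : (0:ℝ) ≤ q.1 ^ p := hpe.pow_nonneg q.1
    by_cases hy : 0 < q.2
    · simp only [hg, if_pos hy]
      have hEb : |deriv^[β] ε q.1| ≤ C * q.2 ^ (j + α + 1) := by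
        calc |deriv^[β] ε q.1| ≤ C * |q.1| ^ (p * (j + α + 1)) := hB q.1 h1
          _ = C * (q.1 ^ p) ^ (j + α + 1) := by rw [pow_mul, hpe.pow_abs]
          _ ≤ C * q.2 ^ (j + α + 1) := by gcongr; exact hq.2
      have habs : |deriv^[β] ε q.1 * (P * q.2 ^ (m - (α:ℤ)))|
          = |deriv^[β] ε q.1| * |P| * q.2 ^ (m - (α:ℤ)) := by
        rw [abs_mul, abs_mul, abs_of_pos (zpow_pos hy _), mul_assoc]
      rw [habs]
      have step : |deriv^[β] ε q.1| * |P| * q.2 ^ (m - (α:ℤ))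
          ≤ (C * q.2 ^ (j + α + 1)) * |P| * q.2 ^ (m - (α:ℤ)) := by
        have h1 : (0:ℝ) ≤ |P| := abs_nonneg _
        have h2 : (0:ℝ) ≤ q.2 ^ (m - (α:ℤ)) := (zpow_pos hy _).le
        gcongr
      have collapse : (C * q.2 ^ (j + α + 1)) * |P| * q.2 ^ (m - (α:ℤ))
          = (C * |P|) * q.2 := by
        have hpow : q.2 ^ (j + α + 1) * q.2 ^ (m - (α:ℤ)) = q.2 := by
          rw [← zpow_natCast q.2 (j + α + 1), ← zpow_add₀ (ne_of_gt hy)]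
          have : ((j + α + 1 : ℕ) : ℤ) + (m - (α:ℤ)) = 1 := by
            rw [hm]; push_cast; ring
          rw [this, zpow_one]
        calc (C * q.2 ^ (j + α + 1)) * |P| * q.2 ^ (m - (α:ℤ))
            = C * |P| * (q.2 ^ (j + α + 1) * q.2 ^ (m - (α:ℤ))) := by ring
          _ = (C * |P|) * q.2 := by rw [hpow]
      rw [collapse] at step
      refine step.trans ?_
      have : (0:ℝ) ≤ q.2 := hy.le
      nlinarith
    · simp only [hg, if_neg hy]
      rw [abs_zero]
      exact mul_nonneg hK0.le (le_trans hx0 hq.2)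
  -- the tendsto of g within Cl
  have htend : Tendsto g (nhdsWithin (0, 0) Cl) (𝓝 0) := by
    apply squeeze_zero_norm' (a := fun q : ℝ × ℝ => K * q.2)
    · have h1 : ∀ᶠ q : ℝ × ℝ in 𝓝 ((0, 0) : ℝ × ℝ), |q.1| < 1 := by
        have ht : Tendsto (fun q : ℝ × ℝ => |q.1|) (𝓝 ((0,0):ℝ×ℝ)) (𝓝 (0:ℝ)) := by
          exact (continuous_abs.comp continuous_fst).tendsto' ((0,0):ℝ×ℝ) 0 (by simp)
        exact ht.eventually_lt_const (by norm_num)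
      filter_upwards [nhdsWithin_le_nhds h1, self_mem_nhdsWithin] with q hq1 hq2
      rw [Real.norm_eq_abs]
      exact hest q hq1.le hq2
    · have ht : Tendsto (fun q : ℝ × ℝ => K * q.2) (𝓝 ((0,0):ℝ×ℝ)) (𝓝 (0:ℝ)) := by
        exact (continuous_const.mul continuous_snd).tendsto' ((0,0):ℝ×ℝ) 0 (by simp)
      exact ht.mono_left nhdsWithin_le_nhds
  have hsub : U ⊆ Cl := fun q hq => ⟨hq.1, hq.2.le⟩
  have heq : ∀ q ∈ U, g q
      = iteratedDeriv α (fun y => iteratedDeriv β (fun x => ε x / y ^ j) q.1) q.2 := by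
    intro q hq
    have hy : 0 < q.2 := lt_of_le_of_lt (hpe.pow_nonneg q.1) hq.2
    rw [hformula q]
    simp only [hg, if_pos hy]
  constructor
  · have ht1 : Tendsto g (nhdsWithin (0, 0) U) (𝓝 0) :=
      htend.mono_left (nhdsWithin_mono _ hsub)
    exact ht1.congr' (by filter_upwards [self_mem_nhdsWithin] with q hq using heq q hq)
  · refine ⟨g, ?_, fun q hq => heq q hq⟩
    have hClclosed : IsClosed Cl := by
      have : Cl = {q : ℝ × ℝ | |q.1| ≤ r} ∩ {q : ℝ × ℝ | q.1 ^ p ≤ q.2} := rfl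
      rw [this]
      exact (isClosed_le (continuous_abs.comp continuous_fst) continuous_const).inter
        (isClosed_le (continuous_fst.pow p) continuous_snd)
    have hclsub : closure U ⊆ Cl := closure_minimal hsub hClclosed
    intro q₀ hq₀
    by_cases hy : 0 < q₀.2
    · apply ContinuousAt.continuousWithinAt
      have hopen : IsOpen {q : ℝ × ℝ | 0 < q.2} := isOpen_lt continuous_const continuous_snd
      have hev : (fun q : ℝ × ℝ => deriv^[β] ε q.1 * (P * q.2 ^ (m - (α:ℤ)))) =ᶠ[𝓝 q₀] g := by
        filter_upwards [hopen.mem_nhds hy] with q hq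
        simp only [hg, if_pos hq]
      have hφ : ContinuousAt (fun q : ℝ × ℝ => deriv^[β] ε q.1 * (P * q.2 ^ (m - (α:ℤ)))) q₀ := by
        refine ContinuousAt.mul ((hE.continuous.comp continuous_fst).continuousAt) ?_
        refine ContinuousAt.mul continuousAt_const ?_
        exact (continuousAt_zpow₀ q₀.2 _ (Or.inl (ne_of_gt hy))).comp continuous_snd.continuousAt
      exact hφ.congr hev
    · obtain ⟨a, b⟩ := q₀
      have hqC := hclsub hq₀
      have hx0 : (0:ℝ) ≤ a ^ p := hpe.pow_nonneg a
      simp only [hCl, mem_setOf_eq] at hqC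
      have hb : b = 0 := le_antisymm (not_lt.mp hy) (le_trans hx0 hqC.2)
      have ha : a = 0 := by
        have hap : a ^ p = 0 := le_antisymm (hb ▸ hqC.2) hx0
        exact pow_eq_zero_iff (by omega : p ≠ 0) |>.mp hap
      subst ha hb
      have hg0 : g (0, 0) = 0 := by simp [hg]
      have : Tendsto g (nhdsWithin ((0:ℝ), (0:ℝ)) (closure U)) (𝓝 (g (0, 0))) := by
        rw [hg0]
        exact htend.mono_left (nhdsWithin_mono _ hclsub)
      exact this
end
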